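/- Let $n, k, r$ be positive integers with $n \geq 2k+1$ and $r \geq 2$, and let $\Omega$ be a finite set with $|\Omega| = n + k(r-2)$. The incidence graph of $\Gamma(KG(n,k),r)$ — the simple graph on pairs $(i, A)$, $i \in \{1,\ldots,r\}$, $A$ a $k$-subset of $\Omega$, with $(i,A)$ adjacent to $(j,B)$ iff $i \neq j$ and $A \cap B = \emptyset$ — is connected. -/

import Mathlib

/-- The incidence graph of the incidence system `Γ(KG(n,k),r)`: vertices are
pairs `(i, A)` with `i` a type in `{1, …, r}` and `A` a `k`-subset of `Ω`;
`(i, A)` and `(j, B)` are adjacent iff `i ≠ j` and `A ∩ B = ∅`. -/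
def incidenceGraph (r k : ℕ) (Ω : Type*) :
    SimpleGraph (Fin r × {A : Finset Ω // A.card = k}) where
  Adj X Y := X.1 ≠ Y.1 ∧ Disjoint X.2.1 Y.2.1
  symm := ⟨fun _ _ h => ⟨h.1.symm, h.2.symm⟩⟩
  loopless := ⟨fun _ h => h.1 rfl⟩

/-!
Two `k`-sets of the same type whose union has at most `|Ω| - k` elements have a common neighbour
of any other type: a `k`-set avoiding both. Since `|Ω| ≥ 2k + 1`, this applies to `A` and the set
obtained from `A` by exchanging one element, so exchanges toward `B` connect `(i, A)` to `(i, B)`.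
Vertices of different types are then joined through any neighbour of the first one.
-/

open Finset

theorem Finset.exists_card_eq_disjoint {α : Type*} [Fintype α] [DecidableEq α] {k : ℕ}
    (s : Finset α) (h : #s + k ≤ Fintype.card α) :
    ∃ u : Finset α, #u = k ∧ Disjoint s u := by
  obtain ⟨u, hus, hu⟩ := exists_subset_card_eq (s := sᶜ) (n := k) (by rw [card_compl]; omega)
  exact ⟨u, hu, disjoint_compl_right.mono_right hus⟩

theorem Finset.exists_swap_closer {α : Type*} [DecidableEq α] {s t : Finset α}
    (hst : #s = #t) (hne : s ≠ t) :
    ∃ u : Finset α, #u = #s ∧ #(s ∪ u) ≤ #s + 1 ∧ #(u \ t) < #(s \ t) := by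
  obtain ⟨a, ha⟩ : (s \ t).Nonempty :=
    sdiff_nonempty.mpr fun h => hne (eq_of_subset_of_card_le h hst.ge)
  obtain ⟨b, hb⟩ : (t \ s).Nonempty :=
    sdiff_nonempty.mpr fun h => hne (eq_of_subset_of_card_le h hst.le).symm
  have has : a ∈ s := (mem_sdiff.mp ha).1
  have hbs : b ∉ s.erase a := fun h => (mem_sdiff.mp hb).2 (mem_of_mem_erase h)
  have hunion : s ∪ insert b (s.erase a) = insert b s := by ext x; grind
  have hsdiff : insert b (s.erase a) \ t = (s \ t).erase a := by ext x; grind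
  refine ⟨insert b (s.erase a), ?_, ?_, ?_⟩
  · rw [card_insert_of_notMem hbs, card_erase_add_one has]
  · rw [hunion]
    exact card_insert_le b s
  · rw [hsdiff]
    exact card_erase_lt_of_mem ha

section

variable {r k : ℕ} {Ω : Type*} [Fintype Ω] [DecidableEq Ω]

theorem incidenceGraph_reachable_of_card_union_add_le {i j : Fin r} (hij : i ≠ j)
    (A B : {A : Finset Ω // #A = k}) (h : #(A.1 ∪ B.1) + k ≤ Fintype.card Ω) :
    (incidenceGraph r k Ω).Reachable (i, A) (i, B) := by
  obtain ⟨C, hC, hdisj⟩ := exists_card_eq_disjoint _ h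
  have hAC : (incidenceGraph r k Ω).Adj (i, A) (j, ⟨C, hC⟩) :=
    ⟨hij, hdisj.mono_left subset_union_left⟩
  have hCB : (incidenceGraph r k Ω).Adj (j, ⟨C, hC⟩) (i, B) :=
    ⟨hij.symm, (hdisj.mono_left subset_union_right).symm⟩
  exact hAC.reachable.trans hCB.reachable

theorem incidenceGraph_reachable_same_type (hΩ : 2 * k + 1 ≤ Fintype.card Ω) {i j : Fin r}
    (hij : i ≠ j) (A B : {A : Finset Ω // #A = k}) :
    (incidenceGraph r k Ω).Reachable (i, A) (i, B) := by
  induction hd : #(A.1 \ B.1) using Nat.strong_induction_on generalizing A with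
  | _ d ih =>
    by_cases hAB : A = B
    · rw [hAB]
    obtain ⟨A', hA', hunion, hcloser⟩ :=
      exists_swap_closer (A.2.trans B.2.symm) (fun h => hAB (Subtype.ext h))
    rw [A.2] at hA' hunion
    have hstep := incidenceGraph_reachable_of_card_union_add_le hij A ⟨A', hA'⟩
      (show #(A.1 ∪ A') + k ≤ _ by omega)
    exact hstep.trans (ih _ (hd ▸ hcloser) ⟨A', hA'⟩ rfl)

theorem incidenceGraph_preconnected (hΩ : 2 * k + 1 ≤ Fintype.card Ω) (hr : 2 ≤ r) :
    (incidenceGraph r k Ω).Preconnected := by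
  rintro ⟨i, A⟩ ⟨j, B⟩
  by_cases hij : i = j
  · subst hij
    have : Nontrivial (Fin r) := Fin.nontrivial_iff_two_le.mpr hr
    obtain ⟨l, hl⟩ := exists_ne i
    exact incidenceGraph_reachable_same_type hΩ hl.symm A B
  · obtain ⟨C, hC, hAC⟩ := exists_card_eq_disjoint (k := k) A.1 (by rw [A.2]; omega)
    have hadj : (incidenceGraph r k Ω).Adj (i, A) (j, ⟨C, hC⟩) := ⟨hij, hAC⟩
    exact hadj.reachable.trans
      (incidenceGraph_reachable_same_type hΩ (Ne.symm hij) ⟨C, hC⟩ B)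

end

theorem incidenceGraph_connected_general (n k r : ℕ) (hn : 2 * k + 1 ≤ n)
    (hr : 2 ≤ r) (Ω : Type*) [Fintype Ω]
    (hΩ : Fintype.card Ω = n + k * (r - 2)) :
    (incidenceGraph r k Ω).Connected := by
  classical
  have hcard : 2 * k + 1 ≤ Fintype.card Ω := by rw [hΩ]; omega
  obtain ⟨A, hA, -⟩ :=
    exists_card_eq_disjoint (k := k) (∅ : Finset Ω) (by rw [card_empty]; omega)
  exact (incidenceGraph r k Ω).connected_iff.mpr
    ⟨incidenceGraph_preconnected hcard hr, ⟨(⟨0, by omega⟩, ⟨A, hA⟩)⟩⟩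

/-- The incidence graph of `Γ(KG(n,k),r)` is connected. -/
theorem incidenceGraph_connected (n k r : ℕ) (hk : 0 < k) (hn : 2 * k + 1 ≤ n)
    (hr : 2 ≤ r) (Ω : Type*) [Fintype Ω] [DecidableEq Ω]
    (hΩ : Fintype.card Ω = n + k * (r - 2)) :
    (incidenceGraph r k Ω).Connected :=
  incidenceGraph_connected_general n k r hn hr Ω hΩ
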